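/- arXiv:1712.06014 — 2 statements merged into one kernel-verified Lean document; each statement's English description precedes it below -/
import Mathlib

section
/- With g constructed as in the decomposition-function definition above (from partial-derivative bounds a_{ij}, b_{ij} of a continuously differentiable f : ℝ^n → ℝ^n), g is monotonically increasing in its first argument: for all z*, if z ≤ z' componentwise then g(z, z*) ≤ g(z', z*) componentwise. -/
lemma key_sign (A B D al : ℝ) (hD : D ∈ Set.Icc A B)
    (hal : al = if A ≤ 0 ∧ 0 ≤ B then (if |A| ≤ |B| then -A else B) else 0) :
    0 ≤ (if 0 ≤ A ∨ (A ≤ 0 ∧ 0 ≤ B ∧ |A| ≤ |B|) then D else 0) + al := by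
  obtain ⟨h1, h2⟩ := hD
  subst hal
  by_cases hc : 0 ≤ A ∨ (A ≤ 0 ∧ 0 ≤ B ∧ |A| ≤ |B|)
  · rw [if_pos hc]
    by_cases h3 : A ≤ 0 ∧ 0 ≤ B
    · rw [if_pos h3]
      by_cases h4 : |A| ≤ |B|
      · rw [if_pos h4]; linarith
      · rw [if_neg h4]
        rcases hc with h5 | h5
        · linarith [h3.2]
        · exact absurd h5.2.2 h4
    · rw [if_neg h3]
      rcases hc with h5 | h5
      · linarith
      · exact absurd ⟨h5.1, h5.2.1⟩ h3
  · rw [if_neg hc]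
    by_cases h3 : A ≤ 0 ∧ 0 ≤ B
    · rw [if_pos h3]
      by_cases h4 : |A| ≤ |B|
      · rw [if_pos h4]; linarith [h3.1]
      · rw [if_neg h4]; linarith [h3.2]
    · rw [if_neg h3]; norm_num

theorem decomposition_increasing_first {n : ℕ}
    (f : (Fin n → ℝ) → (Fin n → ℝ)) (a b : Fin n → Fin n → ℝ)
    (hab : ∀ i j, a i j ≤ b i j)
    (hf : Differentiable ℝ f)
    (hbound : ∀ z i j, fderiv ℝ f z (Pi.single j 1) i ∈ Set.Icc (a i j) (b i j))
    (α : Fin n → Fin n → ℝ)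
    (hα : ∀ i j, α i j =
      if a i j ≤ 0 ∧ 0 ≤ b i j then
        (if |a i j| ≤ |b i j| then -(a i j) else b i j)
      else 0)
    (g : (Fin n → ℝ) → (Fin n → ℝ) → (Fin n → ℝ))
    (hg : ∀ z zs i, g z zs i =
      f (fun j => if 0 ≤ a i j ∨ (a i j ≤ 0 ∧ 0 ≤ b i j ∧ |a i j| ≤ |b i j|)
                  then z j else zs j) i
      + ∑ j, α i j * (z j - zs j)) :
    ∀ zs z z', z ≤ z' → g z zs ≤ g z' zs := by
  classical
  intro zs z z' hzz
  rw [Pi.le_def]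
  intro i
  set v : Fin n → ℝ := fun j => z' j - z j with hv
  have hv0 : ∀ j, 0 ≤ v j := fun j => sub_nonneg.2 (hzz j)
  set c : Fin n → Prop :=
    fun j => 0 ≤ a i j ∨ (a i j ≤ 0 ∧ 0 ≤ b i j ∧ |a i j| ≤ |b i j|) with hc
  set u : Fin n → ℝ := fun j => if c j then v j else 0 with hu
  set base : Fin n → ℝ := fun j => if c j then z j else zs j with hbase
  set p : ℝ → (Fin n → ℝ) := fun t => base + t • u with hp
  set φ : ℝ → ℝ :=
    fun t => f (p t) i + ∑ j, α i j * ((z j + t * v j) - zs j) with hφ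
  -- derivative of φ
  have hderiv : ∀ t : ℝ,
      HasDerivAt φ (fderiv ℝ f (p t) u i + ∑ j, α i j * v j) t := by
    intro t
    have hpath : HasDerivAt p u t := by
      have h1 : HasDerivAt (fun s : ℝ => s • u) ((1 : ℝ) • u) t :=
        (hasDerivAt_id t).smul_const u
      simpa [hp] using h1.const_add base
    have hcomp : HasDerivAt (fun s => f (p s)) (fderiv ℝ f (p t) u) t :=
      (hf (p t)).hasFDerivAt.comp_hasDerivAt t hpath
    have h1 : HasDerivAt (fun s => f (p s) i) (fderiv ℝ f (p t) u i) t :=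
      (hasDerivAt_pi.1 hcomp) i
    have h2 : HasDerivAt (fun s : ℝ => ∑ j, α i j * ((z j + s * v j) - zs j))
        (∑ j, α i j * v j) t := by
      apply HasDerivAt.fun_sum
      intro j _
      have : HasDerivAt (fun s : ℝ => α i j * v j * s + α i j * (z j - zs j))
          (α i j * v j) t := by
        simpa using ((hasDerivAt_id t).const_mul (α i j * v j)).add_const
          (α i j * (z j - zs j))
      exact this.congr_of_eventuallyEq (Filter.Eventually.of_forall fun s => by ring)
    exact h1.add h2
  -- nonnegativity of the derivative
  have hpos : ∀ t : ℝ, 0 ≤ fderiv ℝ f (p t) u i + ∑ j, α i j * v j := by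
    intro t
    have husum : u = ∑ j, (u j) • (Pi.single j 1 : Fin n → ℝ) := by
      funext k
      simp [Finset.sum_apply, Pi.single_apply, Finset.sum_ite_eq', mul_comm]
    have hfe : fderiv ℝ f (p t) u i
        = ∑ j, u j * fderiv ℝ f (p t) (Pi.single j 1) i := by
      conv_lhs => rw [husum]
      rw [map_sum]
      simp [Finset.sum_apply]
    rw [hfe, ← Finset.sum_add_distrib]
    apply Finset.sum_nonneg
    intro j _
    have hkey := key_sign (a i j) (b i j) (fderiv ℝ f (p t) (Pi.single j 1) i)
      (α i j) (hbound (p t) i j) (hα i j)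
    have : u j * fderiv ℝ f (p t) (Pi.single j 1) i + α i j * v j
        = v j * ((if c j then fderiv ℝ f (p t) (Pi.single j 1) i else 0) + α i j) := by
      rw [hu]
      by_cases hcj : c j <;> simp [hcj] <;> ring
    rw [this]
    exact mul_nonneg (hv0 j) hkey
  -- φ is monotone
  have hmono : Monotone φ :=
    monotone_of_deriv_nonneg (fun t => (hderiv t).differentiableAt)
      (fun t => by rw [(hderiv t).deriv]; exact hpos t)
  have h01 : φ 0 ≤ φ 1 := hmono zero_le_one
  have he0 : g z zs i = φ 0 := by
    rw [hg, hφ]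
    congr 1
    · congr 1
      funext j
      simp [hp, hbase, hc]
    · apply Finset.sum_congr rfl
      intro j _
      ring
  have he1 : g z' zs i = φ 1 := by
    rw [hg, hφ]
    congr 1
    · congr 1
      funext j
      have hpj : p 1 j = (if c j then z j + v j else zs j) := by
        by_cases hcj : c j <;> simp [hp, hbase, hu, hcj]
      rw [hpj]
      simp only [hc]
      by_cases hcj : (0 ≤ a i j ∨ (a i j ≤ 0 ∧ 0 ≤ b i j ∧ |a i j| ≤ |b i j|))
      · rw [if_pos hcj, if_pos hcj]; simp [hv]
      · rw [if_neg hcj, if_neg hcj]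
    · apply Finset.sum_congr rfl
      intro j _
      simp only [hv]; ring
  rw [he0, he1]
  exact h01
end

section
/- With g constructed as in the decomposition-function definition above, g is monotonically decreasing in its second argument: for all z, if z* ≤ z' componentwise then g(z, z') ≤ g(z, z*) componentwise. -/
theorem decomposition_decreasing_second {n : ℕ}
    (f : (Fin n → ℝ) → (Fin n → ℝ)) (a b : Fin n → Fin n → ℝ)
    (hab : ∀ i j, a i j ≤ b i j)
    (hf : Differentiable ℝ f)
    (hbound : ∀ z i j, fderiv ℝ f z (Pi.single j 1) i ∈ Set.Icc (a i j) (b i j))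
    (α : Fin n → Fin n → ℝ)
    (hα : ∀ i j, α i j =
      if a i j ≤ 0 ∧ 0 ≤ b i j then
        (if |a i j| ≤ |b i j| then -(a i j) else b i j)
      else 0)
    (g : (Fin n → ℝ) → (Fin n → ℝ) → (Fin n → ℝ))
    (hg : ∀ z zs i, g z zs i =
      f (fun j => if 0 ≤ a i j ∨ (a i j ≤ 0 ∧ 0 ≤ b i j ∧ |a i j| ≤ |b i j|)
                  then z j else zs j) i
      + ∑ j, α i j * (z j - zs j)) :
    ∀ z zs zs', zs ≤ zs' → g z zs' ≤ g z zs := by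
  have hαnn : ∀ i j, 0 ≤ α i j := by
    intro i j
    rw [hα]
    split_ifs with h1 h2
    · linarith [h1.1]
    · exact h1.2
    · exact le_refl 0
  intro z zs zs' hle
  rw [Pi.le_def]
  intro i
  set C : Fin n → Prop := fun j =>
    0 ≤ a i j ∨ (a i j ≤ 0 ∧ 0 ≤ b i j ∧ |a i j| ≤ |b i j|) with hC
  set φ : (Fin n → ℝ) → ℝ := fun w =>
    f (fun j => if C j then z j else w j) i + ∑ j, α i j * (z j - w j) with hφ
  have hgφ : ∀ w, g z w i = φ w := by
    intro w
    rw [hg]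
  -- key: φ is antitone in each coordinate
  have key : ∀ (w : Fin n → ℝ) (k : Fin n),
      Antitone (fun t => φ (Function.update w k t)) := by
    intro w k
    -- derivative of the f-part
    have hψ : ∀ t : ℝ, HasDerivAt (fun t => φ (Function.update w k t))
        ((if C k then 0 else fderiv ℝ f
          (fun j => if C j then z j else Function.update w k t j) (Pi.single k 1) i)
          - α i k) t := by
      intro t
      have hsum : HasDerivAt
          (fun t => ∑ j, α i j * (z j - Function.update w k t j)) (-α i k) t := by
        have : HasDerivAt
            (fun t => ∑ j, α i j * (z j - Function.update w k t j))
            (∑ j, if j = k then -α i k else (0:ℝ)) t := by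
          apply HasDerivAt.fun_sum
          intro j _
          by_cases hj : j = k
          · subst hj
            simp only [Function.update_self, if_pos rfl]
            have : HasDerivAt (fun t : ℝ => α i j * (z j - t)) (α i j * (0 - 1)) t :=
              (HasDerivAt.const_sub (z j) (hasDerivAt_id t)).const_mul (α i j) |>.congr_deriv
                (by ring)
            simpa using this
          · simp only [Function.update_of_ne hj, if_neg hj]
            exact hasDerivAt_const t _
        simpa using this
      by_cases hk : C k
      · -- f-part is constant
        have hconst : ∀ t : ℝ,
            (fun j => if C j then z j else Function.update w k t j)
              = (fun j => if C j then z j else w j) := by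
          intro t
          funext j
          by_cases hj : C j
          · simp [hj]
          · have hjk : j ≠ k := fun h => hj (h ▸ hk)
            simp [hj, Function.update_of_ne hjk]
        have : HasDerivAt (fun t => φ (Function.update w k t)) (0 + (-α i k)) t := by
          apply HasDerivAt.add _ hsum
          have : (fun t : ℝ => f (fun j => if C j then z j else Function.update w k t j) i)
              = fun _ => f (fun j => if C j then z j else w j) i := by
            funext t; rw [hconst t]
          rw [this]
          exact hasDerivAt_const t _
        simpa [if_pos hk, sub_eq_add_neg] using this
      · -- f-part varies with t in coordinate k
        set v : Fin n → ℝ := fun j => if C j then z j else w j with hv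
        have hsel : ∀ t : ℝ,
            (fun j => if C j then z j else Function.update w k t j)
              = Function.update v k t := by
          intro t
          funext j
          by_cases hjk : j = k
          · subst hjk; simp [hv, hk]
          · simp [hv, Function.update_of_ne hjk]
        have hL : HasDerivAt (fun t : ℝ => Function.update v k t) (Pi.single k 1) t := by
          rw [hasDerivAt_pi]
          intro j
          by_cases hjk : j = k
          · subst hjk
            simpa using (hasDerivAt_id' t).congr_deriv (by simp)
          · simp only [Function.update_of_ne hjk, Pi.single_eq_of_ne hjk]
            exact hasDerivAt_const t _
        have hfd : HasDerivAt (fun t : ℝ => f (Function.update v k t))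
            (fderiv ℝ f (Function.update v k t) (Pi.single k 1)) t :=
          (hf (Function.update v k t)).hasFDerivAt.comp_hasDerivAt t hL
        have hfdi : HasDerivAt (fun t : ℝ => f (Function.update v k t) i)
            (fderiv ℝ f (Function.update v k t) (Pi.single k 1) i) t :=
          hasDerivAt_pi.mp hfd i
        have : HasDerivAt (fun t => φ (Function.update w k t))
            (fderiv ℝ f (Function.update v k t) (Pi.single k 1) i + (-α i k)) t := by
          apply HasDerivAt.add _ hsum
          have heq : (fun t : ℝ =>
              f (fun j => if C j then z j else Function.update w k t j) i)
              = fun t => f (Function.update v k t) i := by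
            funext t; rw [hsel t]
          rw [heq]
          exact hfdi
        simpa [if_neg hk, hsel t, sub_eq_add_neg] using this
    apply antitone_of_deriv_nonpos
    · intro t
      exact (hψ t).differentiableAt
    · intro t
      rw [(hψ t).deriv]
      by_cases hk : C k
      · simp only [if_pos hk]
        linarith [hαnn i k]
      · simp only [if_neg hk]
        set p := fderiv ℝ f
          (fun j => if C j then z j else Function.update w k t j) (Pi.single k 1) i
        have hp : p ≤ b i k := (hbound _ i k).2
        simp only [hC, not_or, not_and] at hk
        obtain ⟨ha1, ha2⟩ := hk
        have hak : a i k ≤ 0 := le_of_lt (lt_of_not_ge ha1)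
        by_cases hb : 0 ≤ b i k
        · have hnab : ¬ |a i k| ≤ |b i k| := fun h => ha2 hak hb h
          have : α i k = b i k := by
            rw [hα]; rw [if_pos ⟨hak, hb⟩, if_neg hnab]
          linarith
        · have : α i k = 0 := by
            rw [hα]; rw [if_neg (fun h => hb h.2)]
          push_neg at hb
          linarith
  -- induction over coordinates
  have step : ∀ s : Finset (Fin n),
      φ (fun j => if j ∈ s then zs' j else zs j) ≤ φ zs := by
    intro s
    induction s using Finset.induction_on with
    | empty => simp
    | @insert k s hks ih =>
      set m : Fin n → ℝ := fun j => if j ∈ s then zs' j else zs j with hm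
      have hmerge : (fun j => if j ∈ insert k s then zs' j else zs j)
          = Function.update m k (zs' k) := by
        funext j
        by_cases hjk : j = k
        · subst hjk; simp [hm, Function.update_self]
        · simp [hm, Function.update_of_ne hjk, Finset.mem_insert, hjk]
      rw [hmerge]
      have hmk : m k = zs k := by simp [hm, hks]
      have h1 : φ (Function.update m k (zs' k)) ≤ φ (Function.update m k (m k)) := by
        apply key m k
        rw [hmk]; exact hle k
      rw [Function.update_eq_self] at h1
      exact h1.trans ih
  have := step Finset.univ
  simp only [Finset.mem_univ, if_true] at this
  rw [hgφ, hgφ]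
  exact this
end
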